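/- Let r ≥ 1 be an integer. In ℤ[y], define a_{r−1} = b_{r−1}, a_0 = d_{r−1} − (z_{r−1} + y)·a_{r−1} (when r ≥ 2), and a_{i+1} = d_{r−1} − f_i·a_i for 0 ≤ i ≤ r − 3. Then, setting x = 1 + a_0 + a_1 + ⋯ + a_{r−1}, the identity d_{r−1} = y·x holds in ℤ[y]. -/

import Mathlib

open Polynomial

/-- The sequence `f` in `ℤ[y]`: `f 0 = y+1`, `f 1 = y²+1`,
`f i = f (i-1) * f (i-2) + (f (i-1) - 1) * (f (i-1) - 2)` for `i ≥ 2`. -/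
noncomputable def fP : ℕ → Polynomial ℤ
  | 0 => X + 1
  | 1 => X ^ 2 + 1
  | (i + 2) => fP (i + 1) * fP i + (fP (i + 1) - 1) * (fP (i + 1) - 2)

/-- The sequence `e` in `ℤ[y]`: `e i = y · f 0 ⋯ f (i-1)`. -/
noncomputable def eP (i : ℕ) : Polynomial ℤ := X * ∏ k ∈ Finset.range i, fP k

/-- The sequence `b` in `ℤ[y]`: `b 0 = 1` and `b i = (-1)^i + f (i-1) * b (i-1)` for `i ≥ 1`. -/
noncomputable def bP : ℕ → Polynomial ℤ
  | 0 => 1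
  | (i + 1) => (-1) ^ (i + 1) + fP i * bP i

/-- The sequence `z` in `ℤ[y]`: `z 0 = y - 1`, `z 1 = y² - y + 1`,
`z i = e (i-1) * z (i-1) + z (i-2)` for `i ≥ 2`. -/
noncomputable def zP : ℕ → Polynomial ℤ
  | 0 => X - 1
  | 1 => X ^ 2 - X + 1
  | (i + 2) => eP (i + 1) * zP (i + 1) + zP i

/-- The sequence `d` in `ℤ[y]`: `d i = e i + b i * (f i - 1)`. -/
noncomputable def dP (i : ℕ) : Polynomial ℤ := eP i + bP i * (fP i - 1)

/-- The weight polynomials: `aAux r 0 = d (r-1) − (z (r-1) + y)·b (r-1)` and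
`aAux r (i+1) = d (r-1) − f i · aAux r i`. -/
noncomputable def aAux (r : ℕ) : ℕ → Polynomial ℤ
  | 0 => dP (r - 1) - (zP (r - 1) + X) * bP (r - 1)
  | (i + 1) => dP (r - 1) - fP i * aAux r i

/-- The weight polynomials `a i` (for `0 ≤ i ≤ r-1`): `a (r-1) = b (r-1)`,
`a 0 = d (r-1) − (z (r-1) + y)·a (r-1)`, and `a (i+1) = d (r-1) − f i · a i`
for `0 ≤ i ≤ r-3`. -/
noncomputable def aP (r i : ℕ) : Polynomial ℤ :=
  if i = r - 1 then bP (r - 1) else aAux r i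

lemma eP_zero : eP 0 = X := by simp [eP]

lemma eP_succ (n : ℕ) : eP (n + 1) = eP n * fP n := by
  unfold eP
  rw [Finset.prod_range_succ, ← mul_assoc]

lemma hL4 (n : ℕ) : eP (n + 1) = fP (n + 1) + fP n - 2 := by
  induction n with
  | zero =>
    rw [eP_succ, eP_zero, show fP 0 = X + 1 from rfl, show fP 1 = X ^ 2 + 1 from rfl]
    ring
  | succ n ih =>
    rw [eP_succ (n + 1), ih,
      show fP (n + 2) = fP (n + 1) * fP n + (fP (n + 1) - 1) * (fP (n + 1) - 2) from rfl]
    ring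

lemma hAB (n : ℕ) :
    eP (n + 1) * zP (n + 1) = (fP (n + 1) - 1) * (zP (n + 1) + zP n) + (-1) ^ n * X ∧
    eP (n + 1) * zP n = (fP n - 1) * (zP (n + 1) + zP n) + (-1) ^ (n + 1) * X := by
  induction n with
  | zero =>
    constructor <;>
    · simp only [eP_succ, eP_zero, show fP 0 = X + 1 from rfl,
        show fP 1 = X ^ 2 + 1 from rfl, show zP 0 = X - 1 from rfl,
        show zP 1 = X ^ 2 - X + 1 from rfl]
      ring
  | succ n ih =>
    obtain ⟨hA, hB⟩ := ih
    constructor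
    · rw [eP_succ (n + 1), show zP (n + 2) = eP (n + 1) * zP (n + 1) + zP n from rfl,
        show fP (n + 2) = fP (n + 1) * fP n + (fP (n + 1) - 1) * (fP (n + 1) - 2) from rfl]
      linear_combination
        (fP (n + 1) * eP (n + 1) + fP (n + 1) * (fP (n + 1) - 1)
          - (fP (n + 1) * fP n + (fP (n + 1) - 1) * (fP (n + 1) - 2) - 1)) * hA
        + (fP (n + 1)) ^ 2 * hB + (fP (n + 1) * (-1) ^ n * X) * hL4 n
    · rw [eP_succ (n + 1), show zP (n + 2) = eP (n + 1) * zP (n + 1) + zP n from rfl]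
      linear_combination hA

lemma h5 (n : ℕ) :
    (fP n - 1) * zP (n + 1) - (fP (n + 1) - 1) * zP n = (-1) ^ n * X := by
  induction n with
  | zero =>
    simp only [show fP 0 = X + 1 from rfl, show fP 1 = X ^ 2 + 1 from rfl,
      show zP 0 = X - 1 from rfl, show zP 1 = X ^ 2 - X + 1 from rfl]
    ring
  | succ n ih =>
    rw [show zP (n + 2) = eP (n + 1) * zP (n + 1) + zP n from rfl,
      show fP (n + 2) = fP (n + 1) * fP n + (fP (n + 1) - 1) * (fP (n + 1) - 2) from rfl]
    linear_combination (fP (n + 1) - 1) * (hAB n).1 - fP (n + 1) * ih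

lemma hb (n : ℕ) : X * bP (n + 1) = zP (n + 1) + zP n := by
  induction n with
  | zero =>
    simp only [show bP 1 = (-1) ^ (0 + 1) + fP 0 * bP 0 from rfl,
      show bP 0 = 1 from rfl, show fP 0 = X + 1 from rfl,
      show zP 0 = X - 1 from rfl, show zP 1 = X ^ 2 - X + 1 from rfl]
    ring
  | succ n ih =>
    rw [show bP (n + 2) = (-1) ^ (n + 2) + fP (n + 1) * bP (n + 1) from rfl,
      show zP (n + 2) = eP (n + 1) * zP (n + 1) + zP n from rfl]
    linear_combination fP (n + 1) * ih - (hAB n).1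

lemma haux (r : ℕ) (m : ℕ) :
    X * aAux r m = (-1) ^ m * (eP m * aAux r 0 + dP (r - 1) * (X * bP m - eP m)) := by
  induction m with
  | zero =>
    simp only [pow_zero, one_mul, eP_zero, show bP 0 = 1 from rfl]
    ring
  | succ m ih =>
    rw [show aAux r (m + 1) = dP (r - 1) - fP m * aAux r m from rfl,
      show bP (m + 1) = (-1) ^ (m + 1) + fP m * bP m from rfl, eP_succ m]
    rcases Nat.even_or_odd m with h | h
    · rw [h.neg_one_pow] at ih
      rw [h.add_one.neg_one_pow]
      linear_combination (-(fP m)) * ih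
    · rw [h.neg_one_pow] at ih
      rw [h.add_one.neg_one_pow]
      linear_combination (-(fP m)) * ih

lemma hsum (r N : ℕ) :
    X * ∑ m ∈ Finset.range N, aAux r m =
      (∑ m ∈ Finset.range N, (-1) ^ m * eP m) * aAux r 0 +
        dP (r - 1) * (X * (∑ m ∈ Finset.range N, (-1) ^ m * bP m) -
          ∑ m ∈ Finset.range N, (-1) ^ m * eP m) := by
  induction N with
  | zero => simp
  | succ N ih =>
    rw [Finset.sum_range_succ, Finset.sum_range_succ, Finset.sum_range_succ]
    linear_combination ih + haux r N

lemma Esum (n : ℕ) :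
    ∑ m ∈ Finset.range (n + 1), (-1) ^ m * eP m = (-1) ^ n * (fP n - 1) := by
  induction n with
  | zero =>
    rw [Finset.sum_range_one, eP_zero, show fP 0 = X + 1 from rfl]
    ring
  | succ n ih =>
    rw [Finset.sum_range_succ, ih]
    linear_combination (-1 : Polynomial ℤ) ^ (n + 1) * hL4 n

lemma Bsum (n : ℕ) :
    X * ∑ m ∈ Finset.range (n + 1), (-1) ^ m * bP m = 1 - (-1) ^ (n + 1) * zP n := by
  induction n with
  | zero =>
    rw [Finset.sum_range_one, show bP 0 = 1 from rfl, show zP 0 = X - 1 from rfl]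
    ring
  | succ n ih =>
    rw [Finset.sum_range_succ]
    linear_combination ih + (-1 : Polynomial ℤ) ^ (n + 1) * hb n

/-- For `r ≥ 1`, setting `x = 1 + a 0 + a 1 + ⋯ + a (r-1)`, the identity
`d (r-1) = y · x` holds in `ℤ[y]`. -/
theorem dP_eq_X_mul_x (r : ℕ) (hr : 1 ≤ r) :
    dP (r - 1) = X * (1 + ∑ j ∈ Finset.range r, aP r j) := by
  rcases r with _ | r
  · exact absurd hr (by omega)
  rcases r with _ | k
  · rw [Finset.sum_range_one, show aP 1 0 = bP 0 from if_pos rfl,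
      show bP 0 = 1 from rfl, show dP 0 = eP 0 + bP 0 * (fP 0 - 1) from rfl,
      eP_zero, show bP 0 = 1 from rfl, show fP 0 = X + 1 from rfl]
    ring
  -- r = k + 2
  simp only [Nat.add_sub_cancel]
  rw [Finset.sum_range_succ]
  have hinit : ∀ j ∈ Finset.range (k + 1), aP (k + 2) j = aAux (k + 2) j := by
    intro j hj
    have hjlt : j < k + 1 := Finset.mem_range.mp hj
    simp only [aP, Nat.add_sub_cancel]
    rw [if_neg (by omega)]
  rw [Finset.sum_congr rfl hinit,
    show aP (k + 2) (k + 1) = bP (k + 1) from if_pos rfl]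
  have ha0 : aAux (k + 2) 0 = dP (k + 1) - (zP (k + 1) + X) * bP (k + 1) := rfl
  have hd : dP (k + 1) = eP (k + 1) + bP (k + 1) * (fP (k + 1) - 1) := rfl
  have hs := hsum (k + 2) (k + 1)
  rw [show k + 2 - 1 = k + 1 from rfl] at hs
  rw [Esum k, ha0, hd] at hs
  have hbs := Bsum k
  have hzB := (hAB k).2
  have hz5 := h5 k
  have hbk := hb k
  rw [hd]
  rcases Nat.even_or_odd k with hk | hk
  · rw [hk.neg_one_pow] at hs hz5
    rw [hk.add_one.neg_one_pow] at hbs hzB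
    linear_combination -hs - (eP (k + 1) + bP (k + 1) * (fP (k + 1) - 1)) * hbs
      + (fP k - 1) * hbk - hzB + bP (k + 1) * hz5
  · rw [hk.neg_one_pow] at hs hz5
    rw [hk.add_one.neg_one_pow] at hbs hzB
    linear_combination -hs - (eP (k + 1) + bP (k + 1) * (fP (k + 1) - 1)) * hbs
      - (fP k - 1) * hbk + hzB - bP (k + 1) * hz5
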